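/- Let D ⊆ ℂ^N be a convex domain containing the origin and containing no complex affine line. Then there exist ℂ-linearly independent complex linear functionals L_1, …, L_N : ℂ^N → ℂ and real numbers a_1, …, a_N such that D ⊆ {z ∈ ℂ^N : Re L_1(z) > a_1, …, Re L_N(z) > a_N}. -/

import Mathlib

/-!
If every functional whose real part is bounded below on the open convex set `D` vanishes at `v`,
then `p + ℂ v ⊆ D` for each `p ∈ D`: a point of this line outside `D` would be separated from `D`
(Hahn–Banach) by a functional `L` with `Re L` bounded below on `D`, but `L` is constant along the
line. Hence, if `D` contains no complex line, these functionals have no common zero `v ≠ 0`, so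
they span the dual space and contain a basis of it.
-/

/-- A convex domain in `ℂ^N`: a nonempty open convex subset. -/
def IsConvexDomain {N : ℕ} (D : Set (Fin N → ℂ)) : Prop :=
  IsOpen D ∧ Convex ℝ D ∧ D.Nonempty

/-- `S` contains a complex affine line `{p + ζ • v : ζ ∈ ℂ}` with `v ≠ 0`. -/
def ContainsComplexLine {E : Type*} [AddCommGroup E] [Module ℂ E] (S : Set E) : Prop :=
  ∃ p v : E, v ≠ 0 ∧ ∀ ζ : ℂ, p + ζ • v ∈ S

open Module Submodule

def lowerBoundedFunctionals {E : Type*} [AddCommGroup E] [Module ℂ E] (D : Set E) :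
    Set (E →ₗ[ℂ] ℂ) :=
  {L | ∃ c : ℝ, ∀ z ∈ D, c < (L z).re}

section Separation

variable {E : Type*} [TopologicalSpace E] [AddCommGroup E] [Module ℂ E] [Module ℝ E]
  [IsScalarTower ℝ ℂ E] [IsTopologicalAddGroup E] [ContinuousSMul ℂ E] {D : Set E}

theorem add_smul_mem_of_forall_lowerBoundedFunctionals_apply_eq_zero (hopen : IsOpen D)
    (hconv : Convex ℝ D) {p v : E} (hp : p ∈ D)
    (hv : ∀ L ∈ lowerBoundedFunctionals D, L v = 0) (ζ : ℂ) : p + ζ • v ∈ D := by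
  by_contra hmem
  obtain ⟨f, hf⟩ := RCLike.geometric_hahn_banach_point_open (𝕜 := ℂ) hconv hopen hmem
  have hfv : f v = 0 := hv f ⟨_, hf⟩
  have hfp : f (p + ζ • v) = f p := by simp [hfv]
  exact (hf p hp).ne (by rw [hfp])

theorem span_lowerBoundedFunctionals_eq_top [FiniteDimensional ℂ E] (hopen : IsOpen D)
    (hconv : Convex ℝ D) (hne : D.Nonempty) (hline : ¬ ContainsComplexLine D) :
    span ℂ (lowerBoundedFunctionals D) = ⊤ := by
  obtain ⟨p, hp⟩ := hne
  refine span_eq_top_of_ne_zero fun v hv => ?_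
  by_contra! hzero
  exact hline ⟨p, v, hv,
    add_smul_mem_of_forall_lowerBoundedFunctionals_apply_eq_zero hopen hconv hp hzero⟩

end Separation

theorem exists_linearIndependent_fin_of_span_eq_top {K V : Type*} [DivisionRing K]
    [AddCommGroup V] [Module K V] [FiniteDimensional K V] {s : Set V} (hs : span K s = ⊤)
    {n : ℕ} (hn : finrank K V = n) :
    ∃ f : Fin n → V, LinearIndependent K f ∧ ∀ i, f i ∈ s := by
  subst hn
  let b := Basis.ofSpan hs.ge
  let b' := b.reindex (b.indexEquiv (finBasis K V))
  refine ⟨b', b'.linearIndependent, fun i => ?_⟩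
  rw [Basis.reindex_apply]
  exact Basis.ofSpan_subset hs.ge (Set.mem_range_self _)

theorem siegel_separation_general {N : ℕ} (D : Set (Fin N → ℂ)) (hD : IsConvexDomain D)
    (hline : ¬ ContainsComplexLine D) :
    ∃ (L : Fin N → ((Fin N → ℂ) →ₗ[ℂ] ℂ)) (a : Fin N → ℝ),
      LinearIndependent ℂ L ∧ ∀ z ∈ D, ∀ j, a j < ((L j) z).re := by
  obtain ⟨hopen, hconv, hne⟩ := hD
  obtain ⟨L, hLi, hL⟩ := exists_linearIndependent_fin_of_span_eq_top
    (span_lowerBoundedFunctionals_eq_top hopen hconv hne hline)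
    (by rw [Subspace.dual_finrank_eq, finrank_fin_fun])
  choose a ha using hL
  exact ⟨L, a, hLi, fun z hz j => ha j z hz⟩

/-- Proposition 3.5, Siegel-type separation: if `D ⊆ ℂ^N` is a convex
domain containing the origin and no complex affine line, then there are `ℂ`-linearly
independent linear functionals `L₁, …, L_N` and reals `a₁, …, a_N` with
`D ⊆ {z : Re Lⱼ(z) > aⱼ, j = 1, …, N}`. -/
theorem siegel_separation {N : ℕ} (D : Set (Fin N → ℂ)) (hD : IsConvexDomain D)
    (h0 : (0 : Fin N → ℂ) ∈ D) (hline : ¬ ContainsComplexLine D) :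
    ∃ (L : Fin N → ((Fin N → ℂ) →ₗ[ℂ] ℂ)) (a : Fin N → ℝ),
      LinearIndependent ℂ L ∧ ∀ z ∈ D, ∀ j, a j < ((L j) z).re :=
  siegel_separation_general D hD hline
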